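/- Soundness of multi-constraint parallel clipping: let 𝒳 = {x : x̂ − ε ≤ x ≤ x̂ + ε} with ε ≥ 0, and let A ∈ ℝ^{m×n}, c ∈ ℝ^m. If x ∈ 𝒳 satisfies A x + c ≤ 0 componentwise, then x lies in the box obtained by applying the single-constraint closed-form clipping update (with respect to the original box 𝒳) independently for every row k of A and every coordinate i, and taking the tightest resulting bound in each coordinate. -/

import Mathlib

open Finset

/-!
Every term of a constraint row is bounded below on the box by its value at a corner:
`A k j * x j ≥ A k j * xhat j - |A k j| * ε j`. Bounding all terms except the `i`-th this way
turns `∑ j, A k j * x j + c k ≤ 0` into an upper bound on `A k i * x i`, and dividing by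
`A k i` gives the clipping bound, an upper bound when `A k i > 0` and a lower one when
`A k i < 0`.
-/

lemma mul_sub_abs_mul_le_mul {α : Type*} [Ring α] [LinearOrder α] [IsOrderedRing α]
    {a x xhat e : α} (hlo : xhat - e ≤ x) (hhi : x ≤ xhat + e) :
    a * xhat - |a| * e ≤ a * x := by
  have hdist : |x - xhat| ≤ e := abs_sub_le_iff.2 ⟨sub_le_iff_le_add'.2 hhi, sub_le_comm.1 hlo⟩
  have hdev : |a * (x - xhat)| ≤ |a| * e := by
    rw [abs_mul]
    exact mul_le_mul_of_nonneg_left hdist (abs_nonneg a)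
  calc a * xhat - |a| * e ≤ a * xhat + a * (x - xhat) := by
        rw [sub_eq_add_neg]
        exact add_le_add_right (abs_le.1 hdev).1 _
    _ = a * x := by rw [← mul_add, add_sub_cancel]

lemma le_neg_sum_erase_sub_of_sum_add_nonpos {ι α : Type*} [Fintype ι] [DecidableEq ι]
    [AddCommGroup α] [LinearOrder α] [IsOrderedAddMonoid α] {y lo : ι → α} {c : α}
    (hlo : ∀ j, lo j ≤ y j) (h : ∑ j, y j + c ≤ 0) (i : ι) :
    y i ≤ -(∑ j ∈ univ.erase i, lo j) - c := by
  rw [← add_sum_erase _ _ (mem_univ i)] at h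
  calc y i = (y i + ∑ j ∈ univ.erase i, y j + c) - ∑ j ∈ univ.erase i, y j - c := by abel
    _ ≤ 0 - ∑ j ∈ univ.erase i, lo j - c := by gcongr; exact hlo _
    _ = -(∑ j ∈ univ.erase i, lo j) - c := by rw [zero_sub]

theorem parallel_clipping_sound_general
    (n m : ℕ) (A : Fin m → Fin n → ℝ) (c : Fin m → ℝ) (xhat ε : Fin n → ℝ)
    (clip : Fin m → Fin n → ℝ)
    (hclip : ∀ k i, clip k i =
      (-(∑ j ∈ Finset.univ.erase i, (A k j * xhat j - |A k j| * ε j)) - c k) / A k i)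
    (x : Fin n → ℝ)
    (hx : ∀ j, xhat j - ε j ≤ x j ∧ x j ≤ xhat j + ε j)
    (hcon : ∀ k, ∑ j, A k j * x j + c k ≤ 0) :
    ∀ k i, (0 < A k i → x i ≤ clip k i) ∧ (A k i < 0 → clip k i ≤ x i) := by
  intro k i
  have hrow : x i * A k i ≤
      -(∑ j ∈ univ.erase i, (A k j * xhat j - |A k j| * ε j)) - c k := by
    rw [mul_comm]
    exact le_neg_sum_erase_sub_of_sum_add_nonpos
      (fun j => mul_sub_abs_mul_le_mul (hx j).1 (hx j).2) (hcon k) i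
  rw [hclip k i]
  exact ⟨fun hpos => (le_div_iff₀ hpos).2 hrow, fun hneg => (div_le_iff_of_neg hneg).2 hrow⟩

/-- Soundness of multi-constraint parallel clipping: any point of the box satisfying all
constraints respects every single-constraint clipping update (hence their tightest
combination). -/
theorem parallel_clipping_sound
    (n m : ℕ) (A : Fin m → Fin n → ℝ) (c : Fin m → ℝ) (xhat ε : Fin n → ℝ)
    (hε : ∀ j, 0 ≤ ε j)
    (clip : Fin m → Fin n → ℝ)
    (hclip : ∀ k i, clip k i =
      (-(∑ j ∈ Finset.univ.erase i, (A k j * xhat j - |A k j| * ε j)) - c k) / A k i)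
    (x : Fin n → ℝ)
    (hx : ∀ j, xhat j - ε j ≤ x j ∧ x j ≤ xhat j + ε j)
    (hcon : ∀ k, ∑ j, A k j * x j + c k ≤ 0) :
    ∀ k i, (0 < A k i → x i ≤ clip k i) ∧ (A k i < 0 → clip k i ≤ x i) :=
  parallel_clipping_sound_general n m A c xhat ε clip hclip x hx hcon
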